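/- arXiv:0904.1045 — 2 statements merged into one kernel-verified Lean document; each statement's English description precedes it below -/
import Mathlib

section
/- For all 2 ≤ i ≤ l and m1,n1,m2,n2 ∈ Z, the operators e_{1i}(m1,n1) and e_{1i}(m2,n2) on V commute: [e_{1i}(m1,n1), e_{1i}(m2,n2)] = 0. -/
open MvPolynomial

/-- Index set `{2, …, l}` for the variables. -/
abbrev Idx (l : ℕ) := {i : ℕ // 2 ≤ i ∧ i ≤ l}

/-- The polynomial ring `V = ℂ[x_i(m,n) : 2 ≤ i ≤ l, (m,n) ∈ ℤ²]`. -/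
abbrev V (l : ℕ) := MvPolynomial (Idx l × ℤ × ℤ) ℂ

/-- `e_{ij}(m1,n1) = Σ_{(m,n)} q^{m n1} x_i(m1+m, n1+n) ∂/∂x_j(m,n)`, for `2 ≤ i,j ≤ l`. -/
noncomputable def eGen (l : ℕ) (q : ℂ) (i j : Idx l) (m1 n1 : ℤ) (p : V l) : V l :=
  ∑ᶠ mn : ℤ × ℤ,
    q ^ (mn.1 * n1) • (X (i, m1 + mn.1, n1 + mn.2) * pderiv (j, mn.1, mn.2) p)

/-- `e_{i1}(m,n)` = multiplication by the variable `x_i(m,n)`. -/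
noncomputable def eLow (l : ℕ) (i : Idx l) (m n : ℤ) (p : V l) : V l :=
  X (i, m, n) * p

/-- `e_{11}(m1,n1) = μ δ_{(m1,n1),(0,0)} − Σ_{j=2}^l Σ_{(m,n)} q^{n m1} x_j(m1+m, n1+n) ∂/∂x_j(m,n)`. -/
noncomputable def e11 (l : ℕ) (q μ : ℂ) (m1 n1 : ℤ) (p : V l) : V l :=
  (if (m1, n1) = ((0 : ℤ), (0 : ℤ)) then μ else 0) • p
  - ∑ᶠ j : Idx l, ∑ᶠ mn : ℤ × ℤ,
      q ^ (mn.2 * m1) • (X (j, m1 + mn.1, n1 + mn.2) * pderiv (j, mn.1, mn.2) p)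

/-- `e_{1i}(m1,n1) = q^{−m1 n1} μ ∂/∂x_i(−m1,−n1)
  − Σ_{j=2}^l Σ_{(m,n),(m',n')} q^{n1 m' + n m1 + n m'}
      x_j(m1+m+m', n1+n+n') ∂/∂x_j(m,n) ∂/∂x_i(m',n')`, for `2 ≤ i ≤ l`. -/
noncomputable def eUp (l : ℕ) (q μ : ℂ) (i : Idx l) (m1 n1 : ℤ) (p : V l) : V l :=
  q ^ (-(m1 * n1)) • μ • pderiv (i, -m1, -n1) p
  - ∑ᶠ j : Idx l, ∑ᶠ mm : (ℤ × ℤ) × (ℤ × ℤ),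
      q ^ (n1 * mm.2.1 + mm.1.2 * m1 + mm.1.2 * mm.2.1) •
        (X (j, m1 + mm.1.1 + mm.2.1, n1 + mm.1.2 + mm.2.2) *
          pderiv (j, mm.1.1, mm.1.2) (pderiv (i, mm.2.1, mm.2.2) p))

/-- Degree operator `D1 = Σ_{i=2}^l Σ_{(m,n)} m · x_i(m,n) ∂/∂x_i(m,n)`. -/
noncomputable def D1 (l : ℕ) (p : V l) : V l :=
  ∑ᶠ i : Idx l, ∑ᶠ mn : ℤ × ℤ,
    (mn.1 : ℂ) • (X (i, mn.1, mn.2) * pderiv (i, mn.1, mn.2) p)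

/-- Degree operator `D2 = Σ_{i=2}^l Σ_{(m,n)} n · x_i(m,n) ∂/∂x_i(m,n)`. -/
noncomputable def D2 (l : ℕ) (p : V l) : V l :=
  ∑ᶠ i : Idx l, ∑ᶠ mn : ℤ × ℤ,
    (mn.2 : ℂ) • (X (i, mn.1, mn.2) * pderiv (i, mn.1, mn.2) p)

/-- Commutator `[A,B] = A∘B − B∘A` of operators on `V`. -/
noncomputable def oComm {l : ℕ} (A B : V l → V l) : V l → V l := fun p => A (B p) - B (A p)

/-!
Write `T_r` (`r ∈ ℤ²`) for the derivation `x_j(c) ↦ q^{c₂ r₁} x_j(r + c)` of `V`, so that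
`e₁₁(r) = μ δ_{r,0} − T_r`. Then `e_{1i}(c) = q^{-c₁c₂} μ ∂_{i,-c} − Q_c` with
`Q_c = Σ_b q^{c₂ b₁} T_{c+b} ∂_{i,b}`, and everything follows from the two commutation rules
`[∂_{k,u}, T_r] = q^{(u₂-r₂) r₁} ∂_{k,u-r}` and `[T_r, T_{r'}] = (q^{r'₂ r₁} - q^{r₂ r'₁}) T_{r+r'}`.
By the first, `q^{-c₁c₂} [∂_{i,-c}, Q_{c'}]` is a sum of `∂_{i,-c-c'-b} ∂_{i,b}` which becomes
symmetric in `c ↔ c'` after the substitution `b ↦ -c-c'-b`, so the cross terms of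
`[e_{1i}(c), e_{1i}(c')]` cancel. By the first again, `Q_c Q_{c'}` is a normal-ordered sum
`Σ T T' ∂ ∂` plus a contraction sum `Σ T ∂ ∂`; antisymmetrising in `c ↔ c'`, the second rule turns
the normal-ordered part into a sum of `T ∂ ∂` as well, and the coefficients cancel term by term.
-/

theorem Function.HasFiniteSupport.of_eq_zero {α M N : Type*} [Zero M] [Zero N] {f : α → M}
    {g : α → N} (hf : HasFiniteSupport f) (h : ∀ a, f a = 0 → g a = 0) : HasFiniteSupport g :=
  hf.subset fun a ha hfa => ha (h a hfa)

namespace MvPolynomial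

variable {σ R : Type*} [CommRing R]

theorem pderiv_pderiv_comm (a b : σ) (p : MvPolynomial σ R) :
    pderiv a (pderiv b p) = pderiv b (pderiv a p) := by
  have h : ⁅pderiv a, pderiv b⁆ = (0 : Derivation R (MvPolynomial σ R) (MvPolynomial σ R)) :=
    derivation_ext fun c => by
      classical
      rw [Derivation.commutator_apply, pderiv_X, pderiv_X]
      simp [Pi.single_apply, apply_ite]
  simpa [Derivation.commutator_apply, sub_eq_zero] using congr($h p)

theorem hasFiniteSupport_pderiv (p : MvPolynomial σ R) :
    Function.HasFiniteSupport fun v => pderiv v p :=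
  p.vars.finite_toSet.subset fun _ hv => by_contra fun h => hv (pderiv_eq_zero_of_notMem_vars h)

theorem hasFiniteSupport_pderiv_pderiv (p : MvPolynomial σ R) :
    Function.HasFiniteSupport fun vw : σ × σ => pderiv vw.1 (pderiv vw.2 p) := by
  refine Set.Finite.subset (Set.Finite.prod (hasFiniteSupport_pderiv p)
    (hasFiniteSupport_pderiv p)) fun vw hvw => ⟨fun h => hvw ?_, fun h => hvw ?_⟩
  · simp only [pderiv_pderiv_comm vw.1, h, map_zero]
  · simp only [h, map_zero]

theorem derivation_eq_finsum_pderiv (D : Derivation R (MvPolynomial σ R) (MvPolynomial σ R))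
    (f : MvPolynomial σ R) : D f = ∑ᶠ v, D (X v) * pderiv v f := by
  classical
  have hsum : ∀ g, (∑ v ∈ f.vars, D (X v) • pderiv v) g = ∑ v ∈ f.vars, D (X v) * pderiv v g :=
    fun g => by
      rw [← Derivation.coeFnAddMonoidHom_apply, map_sum, Finset.sum_apply]
      rfl
  rw [finsum_eq_sum_of_support_subset (s := f.vars) _ fun v hv => by_contra fun h =>
    hv (by simp only [pderiv_eq_zero_of_notMem_vars h, mul_zero]), ← hsum]
  refine derivation_eq_of_forall_mem_vars fun c hc => ?_
  rw [hsum, Finset.sum_eq_single c (fun v _ hv => by rw [pderiv_X_of_ne hv.symm, mul_zero])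
    (absurd hc), pderiv_X_self, mul_one]

end MvPolynomial

section QuantumTorus

open Function

variable {ι K : Type*} [Field K]

variable (ι) in
noncomputable def twistedShift (q : K) (r : ℤ × ℤ) :
    Derivation K (MvPolynomial (ι × ℤ × ℤ) K) (MvPolynomial (ι × ℤ × ℤ) K) :=
  mkDerivation K fun v => q ^ (v.2.2 * r.1) • (X (v.1, r + v.2) : MvPolynomial (ι × ℤ × ℤ) K)

theorem twistedShift_X (q : K) (r : ℤ × ℤ) (v : ι × ℤ × ℤ) :
    twistedShift ι q r (X v) = q ^ (v.2.2 * r.1) • X (v.1, r + v.2) :=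
  mkDerivation_X _ _ _

theorem lie_pderiv_twistedShift (q : K) (k : ι) (u r : ℤ × ℤ) :
    ⁅pderiv (R := K) (k, u), twistedShift ι q r⁆ = q ^ ((u.2 - r.2) * r.1) • pderiv (k, u - r) := by
  classical
  refine derivation_ext fun ⟨j, d⟩ => ?_
  have h₀ : twistedShift ι q r (pderiv (k, u) (X (j, d))) = 0 := by
    rw [pderiv_X, Pi.single_apply]
    split_ifs <;> simp
  rw [Derivation.commutator_apply, h₀, sub_zero, Derivation.smul_apply, twistedShift_X,
    Derivation.map_smul, pderiv_X, pderiv_X]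
  by_cases h : (j, d) = (k, u - r)
  · obtain ⟨rfl, rfl⟩ := Prod.mk.inj h
    simp
  · have h' : ((j, r + d) : ι × ℤ × ℤ) ≠ (k, u) := by
      rintro ⟨⟩
      simp at h
    simp [h, h']

theorem lie_twistedShift {q : K} (hq : q ≠ 0) (r r' : ℤ × ℤ) :
    ⁅twistedShift ι q r, twistedShift ι q r'⁆ =
      (q ^ (r'.2 * r.1) - q ^ (r.2 * r'.1)) • twistedShift ι q (r + r') := by
  refine derivation_ext fun ⟨j, d⟩ => ?_
  rw [Derivation.commutator_apply, twistedShift_X, twistedShift_X, Derivation.map_smul,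
    Derivation.map_smul, twistedShift_X, twistedShift_X, Derivation.smul_apply, twistedShift_X]
  simp only [smul_smul, ← zpow_add₀ hq, sub_mul, sub_smul]
  rw [add_left_comm r' r d, add_assoc r r' d]
  congr 3 <;> simp only [Prod.fst_add, Prod.snd_add] <;> ring

theorem hasFiniteSupport_pderiv_mk (i : ι) (p : MvPolynomial (ι × ℤ × ℤ) K) :
    HasFiniteSupport fun b : ℤ × ℤ => pderiv (i, b) p :=
  (hasFiniteSupport_pderiv p).fun_comp_of_injective (f := fun v => pderiv v p)
    (Prod.mk_right_injective i)

theorem hasFiniteSupport_pderiv_pderiv_mk (i : ι) (p : MvPolynomial (ι × ℤ × ℤ) K) :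
    HasFiniteSupport fun bb : (ℤ × ℤ) × (ℤ × ℤ) => pderiv (i, bb.1) (pderiv (i, bb.2) p) :=
  (hasFiniteSupport_pderiv_pderiv p).fun_comp_of_injective
    (g := fun bb : (ℤ × ℤ) × (ℤ × ℤ) => (((i, bb.1), (i, bb.2)) : (ι × ℤ × ℤ) × (ι × ℤ × ℤ)))
    (Prod.map_injective.2 ⟨Prod.mk_right_injective i, Prod.mk_right_injective i⟩)

theorem hasFiniteSupport_twistedShift_pderiv (q : K) (i : ι) (c : ℤ × ℤ)
    (p : MvPolynomial (ι × ℤ × ℤ) K) :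
    HasFiniteSupport fun b => q ^ (c.2 * b.1) • twistedShift ι q (c + b) (pderiv (i, b) p) :=
  (hasFiniteSupport_pderiv_mk i p).of_eq_zero fun b h => by rw [h, map_zero, smul_zero]

noncomputable def quadraticPart (q : K) (i : ι) (c : ℤ × ℤ) :
    MvPolynomial (ι × ℤ × ℤ) K →ₗ[K] MvPolynomial (ι × ℤ × ℤ) K where
  toFun p := ∑ᶠ b, q ^ (c.2 * b.1) • twistedShift ι q (c + b) (pderiv (i, b) p)
  map_add' p p' := by
    simp only [map_add, smul_add]
    exact finsum_add_distrib (hasFiniteSupport_twistedShift_pderiv q i c p)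
      (hasFiniteSupport_twistedShift_pderiv q i c p')
  map_smul' a p := by
    simp only [RingHom.id_apply, smul_finsum, Derivation.map_smul, smul_comm a]

theorem quadraticPart_apply (q : K) (i : ι) (c : ℤ × ℤ) (p : MvPolynomial (ι × ℤ × ℤ) K) :
    quadraticPart q i c p = ∑ᶠ b, q ^ (c.2 * b.1) • twistedShift ι q (c + b) (pderiv (i, b) p) :=
  rfl

theorem pderiv_quadraticPart_sub (q : K) (i k : ι) (c u : ℤ × ℤ)
    (p : MvPolynomial (ι × ℤ × ℤ) K) :
    pderiv (k, u) (quadraticPart q i c p) - quadraticPart q i c (pderiv (k, u) p) =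
      ∑ᶠ b, (q ^ (c.2 * b.1) * q ^ ((u.2 - (c + b).2) * (c + b).1)) •
        pderiv (k, u - (c + b)) (pderiv (i, b) p) := by
  have hfin := hasFiniteSupport_twistedShift_pderiv q i c p
  rw [quadraticPart_apply, quadraticPart_apply, map_finsum _ hfin,
    ← finsum_sub_distrib (hfin.fun_comp (map_zero _))
      (hasFiniteSupport_twistedShift_pderiv q i c _)]
  refine finsum_congr fun b => ?_
  rw [Derivation.map_smul, pderiv_pderiv_comm (i, b), ← smul_sub, ← Derivation.commutator_apply,
    lie_pderiv_twistedShift, Derivation.smul_apply, smul_smul]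

theorem zpow_smul_pderiv_quadraticPart_sub_comm {q : K} (hq : q ≠ 0) (i : ι) (c c' : ℤ × ℤ)
    (p : MvPolynomial (ι × ℤ × ℤ) K) :
    q ^ (-(c.1 * c.2)) •
        (pderiv (i, -c) (quadraticPart q i c' p) - quadraticPart q i c' (pderiv (i, -c) p)) =
      q ^ (-(c'.1 * c'.2)) •
        (pderiv (i, -c') (quadraticPart q i c p) - quadraticPart q i c (pderiv (i, -c') p)) := by
  rw [pderiv_quadraticPart_sub, pderiv_quadraticPart_sub, smul_finsum, smul_finsum]
  conv_rhs => rw [← finsum_comp_equiv (Equiv.subLeft (-c - c'))]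
  refine finsum_congr fun b => ?_
  have h₁ : -c' - (c + (-c - c' - b)) = b := by abel
  have h₂ : -c - c' - b = -c - (c' + b) := by abel
  rw [Equiv.subLeft_apply, h₁, h₂, pderiv_pderiv_comm, smul_smul, smul_smul, ← zpow_add₀ hq,
    ← zpow_add₀ hq, ← zpow_add₀ hq, ← zpow_add₀ hq]
  congr 2
  simp only [Prod.fst_add, Prod.snd_add, Prod.fst_sub, Prod.snd_sub, Prod.fst_neg, Prod.snd_neg]
  ring

noncomputable def normalOrderedTerm (q : K) (i : ι) (c c' : ℤ × ℤ)
    (p : MvPolynomial (ι × ℤ × ℤ) K) (bb : (ℤ × ℤ) × (ℤ × ℤ)) : MvPolynomial (ι × ℤ × ℤ) K :=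
  (q ^ (c.2 * bb.1.1) * q ^ (c'.2 * bb.2.1)) •
    twistedShift ι q (c + bb.1)
      (twistedShift ι q (c' + bb.2) (pderiv (i, bb.1) (pderiv (i, bb.2) p)))

noncomputable def contractionTerm (q : K) (i : ι) (c c' : ℤ × ℤ)
    (p : MvPolynomial (ι × ℤ × ℤ) K) (bb : (ℤ × ℤ) × (ℤ × ℤ)) : MvPolynomial (ι × ℤ × ℤ) K :=
  (q ^ (c.2 * (bb.1 + (c' + bb.2)).1) * q ^ (c'.2 * bb.2.1) * q ^ (bb.1.2 * (c' + bb.2).1)) •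
    twistedShift ι q (c + (bb.1 + (c' + bb.2))) (pderiv (i, bb.1) (pderiv (i, bb.2) p))

theorem hasFiniteSupport_normalOrderedTerm (q : K) (i : ι) (c c' : ℤ × ℤ)
    (p : MvPolynomial (ι × ℤ × ℤ) K) : HasFiniteSupport (normalOrderedTerm q i c c' p) :=
  (hasFiniteSupport_pderiv_pderiv_mk i p).of_eq_zero fun _ h => by
    simp only [normalOrderedTerm, h, map_zero, smul_zero]

theorem hasFiniteSupport_contractionTerm (q : K) (i : ι) (c c' : ℤ × ℤ)
    (p : MvPolynomial (ι × ℤ × ℤ) K) : HasFiniteSupport (contractionTerm q i c c' p) :=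
  (hasFiniteSupport_pderiv_pderiv_mk i p).of_eq_zero fun _ h => by
    simp only [contractionTerm, h, map_zero, smul_zero]

theorem quadraticPart_quadraticPart (q : K) (i : ι) (c c' : ℤ × ℤ)
    (p : MvPolynomial (ι × ℤ × ℤ) K) :
    quadraticPart q i c (quadraticPart q i c' p) =
      ∑ᶠ bb, normalOrderedTerm q i c c' p bb + ∑ᶠ bb, contractionTerm q i c c' p bb := by
  let C : (ℤ × ℤ) × (ℤ × ℤ) → MvPolynomial (ι × ℤ × ℤ) K := fun bb =>
    (q ^ (c.2 * bb.1.1) * q ^ (c'.2 * bb.2.1) * q ^ ((bb.1.2 - (c' + bb.2).2) * (c' + bb.2).1)) •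
      twistedShift ι q (c + bb.1) (pderiv (i, bb.1 - (c' + bb.2)) (pderiv (i, bb.2) p))
  let shear : (ℤ × ℤ) × (ℤ × ℤ) ≃ (ℤ × ℤ) × (ℤ × ℤ) :=
    { toFun := fun bb => (bb.1 + (c' + bb.2), bb.2)
      invFun := fun bb => (bb.1 - (c' + bb.2), bb.2)
      left_inv := fun _ => by simp
      right_inv := fun _ => by simp }
  have hN := hasFiniteSupport_normalOrderedTerm q i c c' p
  have hC : HasFiniteSupport C := ((hasFiniteSupport_pderiv_pderiv_mk i p).comp_of_injective
    shear.symm.injective).of_eq_zero fun _ h => by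
      simp only [Function.comp_apply, shear, Equiv.coe_fn_symm_mk] at h
      simp only [C, h, map_zero, smul_zero]
  calc quadraticPart q i c (quadraticPart q i c' p)
      = ∑ᶠ b, ∑ᶠ b', (normalOrderedTerm q i c c' p (b, b') + C (b, b')) := by
        rw [quadraticPart_apply, quadraticPart_apply]
        refine finsum_congr fun b => ?_
        rw [map_finsum _ (hasFiniteSupport_twistedShift_pderiv q i c' p),
          map_finsum _ ((hasFiniteSupport_twistedShift_pderiv q i c' p).fun_comp (map_zero _)),
          smul_finsum]
        refine finsum_congr fun b' => ?_
        have hcomm : ∀ f, pderiv (i, b) (twistedShift ι q (c' + b') f) =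
            twistedShift ι q (c' + b') (pderiv (i, b) f) +
              ⁅pderiv (i, b), twistedShift ι q (c' + b')⁆ f :=
          fun f => by rw [Derivation.commutator_apply]; abel
        simp only [normalOrderedTerm, C, Derivation.map_smul, hcomm, lie_pderiv_twistedShift,
          Derivation.smul_apply, map_add, smul_add, smul_smul, mul_assoc]
    _ = ∑ᶠ bb, (normalOrderedTerm q i c c' p bb + C bb) := (finsum_curry _ (hN.add hC)).symm
    _ = ∑ᶠ bb, normalOrderedTerm q i c c' p bb + ∑ᶠ bb, C (shear bb) := by
        rw [finsum_add_distrib hN hC, finsum_comp_equiv shear]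
    _ = _ := by
        congr 1
        refine finsum_congr fun bb => ?_
        simp [C, shear, contractionTerm]

theorem normalOrderedTerm_sub_add_contractionTerm_sub {q : K} (hq : q ≠ 0) (i : ι)
    (c c' : ℤ × ℤ) (p : MvPolynomial (ι × ℤ × ℤ) K) (bb : (ℤ × ℤ) × (ℤ × ℤ)) :
    normalOrderedTerm q i c c' p bb - normalOrderedTerm q i c' c p bb.swap +
      (contractionTerm q i c c' p bb - contractionTerm q i c' c p bb.swap) = 0 := by
  obtain ⟨b, b'⟩ := bb
  simp only [normalOrderedTerm, contractionTerm, Prod.swap_prod_mk]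
  rw [pderiv_pderiv_comm (i, b'), mul_comm (q ^ (c'.2 * b'.1)), ← smul_sub,
    ← Derivation.commutator_apply, lie_twistedShift hq, Derivation.smul_apply, smul_smul]
  rw [show c + b + (c' + b') = c + (b + (c' + b')) by abel,
    show c' + (b' + (c + b)) = c + (b + (c' + b')) by abel, ← sub_smul, ← add_smul]
  refine smul_eq_zero_of_left ?_ _
  -- each of the two powers in the bracket coefficient cancels one contraction term
  simp only [mul_sub, ← zpow_add₀ hq, Prod.fst_add, Prod.snd_add]
  ring_nf

theorem quadraticPart_comm {q : K} (hq : q ≠ 0) (i : ι) (c c' : ℤ × ℤ)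
    (p : MvPolynomial (ι × ℤ × ℤ) K) :
    quadraticPart q i c (quadraticPart q i c' p) =
      quadraticPart q i c' (quadraticPart q i c p) := by
  let e := Equiv.prodComm (ℤ × ℤ) (ℤ × ℤ)
  have hN := hasFiniteSupport_normalOrderedTerm q i c c' p
  have hC := hasFiniteSupport_contractionTerm q i c c' p
  have hN' := (hasFiniteSupport_normalOrderedTerm q i c' c p).fun_comp_of_injective e.injective
  have hC' := (hasFiniteSupport_contractionTerm q i c' c p).fun_comp_of_injective e.injective
  rw [← sub_eq_zero, quadraticPart_quadraticPart, quadraticPart_quadraticPart,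
    ← finsum_comp_equiv e (f := normalOrderedTerm q i c' c p),
    ← finsum_comp_equiv e (f := contractionTerm q i c' c p), add_sub_add_comm,
    ← finsum_sub_distrib hN hN', ← finsum_sub_distrib hC hC']
  exact (finsum_add_distrib (hN.sub hN') (hC.sub hC')).symm.trans
    (finsum_eq_zero_of_forall_eq_zero (normalOrderedTerm_sub_add_contractionTerm_sub hq i c c' p))

end QuantumTorus

theorem eUp_eq_sub_quadraticPart {l : ℕ} {q : ℂ} (hq : q ≠ 0) (μ : ℂ) (i : Idx l) (c : ℤ × ℤ)
    (p : V l) :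
    eUp l q μ i c.1 c.2 p = q ^ (-(c.1 * c.2)) • μ • pderiv (i, -c) p - quadraticPart q i c p := by
  let G : (ℤ × ℤ) × Idx l × ℤ × ℤ → V l := fun bv =>
    q ^ (c.2 * bv.1.1) •
      (twistedShift (Idx l) q (c + bv.1) (X bv.2) * pderiv bv.2 (pderiv (i, bv.1) p))
  let e : Idx l × (ℤ × ℤ) × (ℤ × ℤ) ≃ (ℤ × ℤ) × Idx l × ℤ × ℤ :=
    { toFun := fun x => (x.2.2, x.1, x.2.1)
      invFun := fun y => (y.2.1, y.2.2, y.1)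
      left_inv := fun _ => rfl
      right_inv := fun _ => rfl }
  have hinj : Function.Injective fun bv : (ℤ × ℤ) × Idx l × ℤ × ℤ =>
      (bv.2, ((i, bv.1) : Idx l × ℤ × ℤ)) :=
    fun x y h => Prod.ext (Prod.mk_right_injective i (congrArg (·.2) h)) (congrArg (·.1) h)
  have hG : Function.HasFiniteSupport G :=
    ((hasFiniteSupport_pderiv_pderiv p).fun_comp_of_injective hinj).of_eq_zero fun _ h => by
      simp only [G, h, mul_zero, smul_zero]
  have hquad : ∑ᶠ j, ∑ᶠ mm, G (e (j, mm)) = quadraticPart q i c p :=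
    calc ∑ᶠ j, ∑ᶠ mm, G (e (j, mm))
        = ∑ᶠ x, G (e x) := (finsum_curry _ (hG.comp_of_injective e.injective)).symm
      _ = ∑ᶠ bv, G bv := finsum_comp_equiv e
      _ = ∑ᶠ b, ∑ᶠ v, G (b, v) := finsum_curry G hG
      _ = quadraticPart q i c p := by
        refine finsum_congr fun b => ?_
        rw [derivation_eq_finsum_pderiv, smul_finsum]
  rw [eUp, ← hquad]
  congr 1
  refine finsum_congr fun j => finsum_congr fun mm => ?_
  simp only [G, e, Equiv.coe_fn_mk, twistedShift_X, smul_mul_assoc, smul_smul, ← zpow_add₀ hq]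
  have hX : ((j, c + mm.2 + mm.1) : Idx l × ℤ × ℤ)
      = (j, c.1 + mm.1.1 + mm.2.1, c.2 + mm.1.2 + mm.2.2) := by
    ext <;> simp only [Prod.fst_add, Prod.snd_add] <;> ring
  rw [hX, Prod.fst_add]
  congr 2
  ring

theorem stmt7_general (l : ℕ) (q μ : ℂ) (hq : q ≠ 0)
    (i : Idx l) (m1 n1 m2 n2 : ℤ) :
    oComm (eUp l q μ i m1 n1) (eUp l q μ i m2 n2) = fun _ => 0 := by
  show oComm (eUp l q μ i (m1, n1).1 (m1, n1).2) (eUp l q μ i (m2, n2).1 (m2, n2).2) = _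
  generalize (m1, n1) = c, (m2, n2) = c'
  funext p
  simp only [oComm, eUp_eq_sub_quadraticPart hq, map_sub, Derivation.map_smul, map_smul]
  linear_combination (norm := module)
    (q ^ (-(c.1 * c.2)) * μ * (q ^ (-(c'.1 * c'.2)) * μ)) • pderiv_pderiv_comm (i, -c) (i, -c') p +
      quadraticPart_comm hq i c c' p - μ • zpow_smul_pderiv_quadraticPart_sub_comm hq i c c' p

theorem stmt7 (l : ℕ) (hl : 2 ≤ l) (q μ : ℂ) (hq : q ≠ 0)
    (i : Idx l) (m1 n1 m2 n2 : ℤ) :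
    oComm (eUp l q μ i m1 n1) (eUp l q μ i m2 n2) = fun _ => 0 :=
  stmt7_general l q μ hq i m1 n1 m2 n2
end

section
/- For all m1,n1,m2,n2 ∈ Z, [e_{11}(m1,n1), e_{11}(m2,n2)] = (q^{m2 n1} − q^{m1 n2}) e_{11}(m1+m2, n1+n2). -/
/-!
The sum in `e₁₁(m,n)` is the derivation `E(m,n)` of `V` with
`x_j(a,b) ↦ q^{bm} x_j(m+a, n+b)`, since every derivation `D` of a polynomial ring satisfies
`D p = Σ_v ∂_v p · D(x_v)`. A commutator of derivations is a derivation, so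
`[E(m₁,n₁), E(m₂,n₂)]` is determined by its values on the variables, where it equals
`(q^{m₁n₂} − q^{m₂n₁}) E(m₁+m₂, n₁+n₂)` because `q ≠ 0` lets the powers of `q` combine.
The scalar part `μ δ` commutes with everything, and it drops out of the right-hand side because
`m₁+m₂ = n₁+n₂ = 0` forces `m₂n₁ = m₁n₂`.
-/

open MvPolynomial

theorem MvPolynomial.support_pderiv_smul_subset_vars {σ R A : Type*} [CommSemiring R]
    [AddCommMonoid A] [Module (MvPolynomial σ R) A] (p : MvPolynomial σ R) (f : σ → A) :
    Function.support (fun i => pderiv i p • f i) ⊆ p.vars := by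
  intro i hi
  by_contra h
  exact hi (by simp [pderiv_eq_zero_of_notMem_vars h])

theorem MvPolynomial.derivation_eq_finsum_pderiv_smul {σ R A : Type*} [CommSemiring R]
    [AddCommMonoid A] [Module R A] [Module (MvPolynomial σ R) A]
    [IsScalarTower R (MvPolynomial σ R) A]
    (D : Derivation R (MvPolynomial σ R) A) (p : MvPolynomial σ R) :
    D p = ∑ᶠ i, pderiv i p • D (X i) := by
  classical
  rw [finsum_eq_finsetSum_of_support_subset _ (support_pderiv_smul_subset_vars p _)]
  let D' : Derivation R (MvPolynomial σ R) A :=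
    ∑ i ∈ p.vars, (LinearMap.toSpanSingleton _ _ (D (X i))).compDer (pderiv i)
  have hD' : ∀ f, D' f = ∑ i ∈ p.vars, pderiv i f • D (X i) := by
    intro f
    rw [← Derivation.coeFnAddMonoidHom_apply, map_sum, Finset.sum_apply]
    rfl
  rw [← hD']
  refine derivation_eq_of_forall_mem_vars fun j hj => ?_
  rw [hD', Finset.sum_eq_single j]
  · simp
  · intro i _ hij
    simp [pderiv_X, hij]
  · exact fun h => (h hj).elim

noncomputable def e11Derivation (l : ℕ) (q : ℂ) (m n : ℤ) : Derivation ℂ (V l) (V l) :=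
  mkDerivation ℂ fun v => q ^ (v.2.2 * m) • X (v.1, m + v.2.1, n + v.2.2)

theorem e11Derivation_X {l : ℕ} (q : ℂ) (m n : ℤ) (v : Idx l × ℤ × ℤ) :
    e11Derivation l q m n (X v) = q ^ (v.2.2 * m) • X (v.1, m + v.2.1, n + v.2.2) :=
  mkDerivation_X _ _ _

theorem e11_eq_smul_sub_e11Derivation (l : ℕ) (q μ : ℂ) (m n : ℤ) (p : V l) :
    e11 l q μ m n p =
      (if (m, n) = ((0 : ℤ), (0 : ℤ)) then μ else 0) • p - e11Derivation l q m n p := by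
  rw [e11, derivation_eq_finsum_pderiv_smul (e11Derivation l q m n) p, finsum_curry]
  · simp only [e11Derivation_X, smul_eq_mul, smul_mul_assoc, mul_comm]
  · exact p.vars.finite_toSet.subset (support_pderiv_smul_subset_vars p _)

theorem e11Derivation_bracket {l : ℕ} {q : ℂ} (hq : q ≠ 0) (m1 n1 m2 n2 : ℤ) :
    ⁅e11Derivation l q m1 n1, e11Derivation l q m2 n2⁆ =
      (q ^ (m1 * n2) - q ^ (m2 * n1)) • e11Derivation l q (m1 + m2) (n1 + n2) := by
  ext ⟨j, a, b⟩
  simp only [Derivation.commutator_apply, Derivation.smul_apply, e11Derivation_X,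
    Derivation.map_smul, smul_smul]
  rw [sub_mul, sub_smul, ← zpow_add₀ hq, ← zpow_add₀ hq, ← zpow_add₀ hq, ← zpow_add₀ hq]
  congr 3 <;> ring_nf

theorem stmt11_general (l : ℕ) (q μ : ℂ) (hq : q ≠ 0)
    (m1 n1 m2 n2 : ℤ) :
    oComm (e11 l q μ m1 n1) (e11 l q μ m2 n2) = fun p =>
      (q ^ (m2 * n1) - q ^ (m1 * n2)) • e11 l q μ (m1 + m2) (n1 + n2) p := by
  funext p
  have hδ : (q ^ (m2 * n1) - q ^ (m1 * n2)) *
      (if (m1 + m2, n1 + n2) = ((0 : ℤ), (0 : ℤ)) then μ else 0) = 0 := by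
    split_ifs with h
    · obtain ⟨rfl, rfl⟩ : m2 = -m1 ∧ n2 = -n1 := by
        simp only [Prod.mk.injEq] at h
        omega
      ring_nf
    · ring
  have hcomm : e11Derivation l q m1 n1 (e11Derivation l q m2 n2 p) -
      e11Derivation l q m2 n2 (e11Derivation l q m1 n1 p) =
      (q ^ (m1 * n2) - q ^ (m2 * n1)) • e11Derivation l q (m1 + m2) (n1 + n2) p := by
    rw [← Derivation.commutator_apply, e11Derivation_bracket hq, Derivation.smul_apply]
  simp only [oComm, e11_eq_smul_sub_e11Derivation, map_sub, Derivation.map_smul]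
  linear_combination (norm := module) hcomm - hδ • p

theorem stmt11 (l : ℕ) (hl : 2 ≤ l) (q μ : ℂ) (hq : q ≠ 0)
    (m1 n1 m2 n2 : ℤ) :
    oComm (e11 l q μ m1 n1) (e11 l q μ m2 n2) = fun p =>
      (q ^ (m2 * n1) - q ^ (m1 * n2)) • e11 l q μ (m1 + m2) (n1 + n2) p :=
  stmt11_general l q μ hq m1 n1 m2 n2
end
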